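/- Let t₀ ≠ 0 and let φ(t₀) = Id_s ⊕ θ(a₁t₀) ⊕ ⋯ ⊕ θ(aₙt₀) be block diagonal with an s×s identity block and rotation blocks, with all a_i > 0. If φ(t₀) is conjugate over ℝ to an integer matrix, then a_i t₀ ∈ πℚ for every i. -/

import Mathlib

/-!
An orthogonal matrix `U` conjugate to an integer matrix `E` has finite order: the powers of `U`
have entries bounded by `1`, so the powers of `E` are integer matrices with bounded entries and
take only finitely many values. For `U = Id_s ⊕ θ(a₁t₀) ⊕ ⋯ ⊕ θ(aₙt₀)` this gives
`θ(k aᵢt₀) = θ(aᵢt₀)ᵏ = 1` for some `k > 0`, i.e. `k aᵢt₀ ∈ 2πℤ`.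
-/

open Real Matrix

noncomputable def rot (t : ℝ) : Matrix (Fin 2) (Fin 2) ℝ :=
  !![Real.cos t, Real.sin t; -Real.sin t, Real.cos t]

namespace Matrix

section Bounds

variable {ι κ o 𝕜 : Type*} [Fintype κ] [RCLike 𝕜]

theorem finite_setOf_norm_intCast_apply_le [Fintype ι] (C : ι → κ → ℝ) :
    {E : Matrix ι κ ℤ | ∀ i j, ‖(E i j : 𝕜)‖ ≤ C i j}.Finite := by
  refine (Set.Finite.pi fun i => Set.Finite.pi fun j =>
    Set.finite_Icc (-⌈C i j⌉) ⌈C i j⌉).subset fun E hE i _ j _ => ?_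
  have h := hE i j
  rw [← RCLike.ofReal_intCast, RCLike.norm_ofReal, ← Int.cast_abs] at h
  exact abs_le.mp (Int.cast_le.mp (h.trans (Int.le_ceil _)))

theorem norm_mul_mul_apply_le [Fintype o] {Q : Matrix ι κ 𝕜} {M : Matrix κ κ 𝕜}
    {P : Matrix κ o 𝕜} (hM : ∀ k k', ‖M k k'‖ ≤ 1) (i : ι) (j : o) :
    ‖(Q * M * P) i j‖ ≤ (∑ k, ‖Q i k‖) * ∑ k, ‖P k j‖ := by
  have hQM (k' : κ) : ‖(Q * M) i k'‖ ≤ ∑ k, ‖Q i k‖ :=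
    calc ‖(Q * M) i k'‖ ≤ ∑ k, ‖Q i k‖ * ‖M k k'‖ := by
          rw [mul_apply]; exact (norm_sum_le _ _).trans_eq (by simp only [norm_mul])
      _ ≤ ∑ k, ‖Q i k‖ := by
          gcongr with k; exact mul_le_of_le_one_right (norm_nonneg _) (hM k k')
  calc ‖(Q * M * P) i j‖ ≤ ∑ k, ‖(Q * M) i k‖ * ‖P k j‖ := by
        rw [mul_apply]; exact (norm_sum_le _ _).trans_eq (by simp only [norm_mul])
    _ ≤ ∑ k, (∑ k, ‖Q i k‖) * ‖P k j‖ := by gcongr with k; exact hQM k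
    _ = (∑ k, ‖Q i k‖) * ∑ k, ‖P k j‖ := (Finset.mul_sum ..).symm

end Bounds

theorem isOfFinOrder_of_conj_eq_map_intCast {ι 𝕜 : Type*} [Fintype ι] [DecidableEq ι]
    [RCLike 𝕜] {U : unitaryGroup ι 𝕜} {P : Matrix ι ι 𝕜} (hP : IsUnit P) {E : Matrix ι ι ℤ}
    (hE : P⁻¹ * U * P = E.map (Int.cast : ℤ → 𝕜)) : IsOfFinOrder U := by
  lift P to (Matrix ι ι 𝕜)ˣ using hP
  rw [← coe_units_inv] at hE
  set conj : unitaryGroup ι 𝕜 → Matrix ι ι 𝕜 := fun V =>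
    ((P⁻¹ : (Matrix ι ι 𝕜)ˣ) : Matrix ι ι 𝕜) * V * P
  have hconj_pow (m : ℕ) : conj (U ^ m) = (E ^ m).map (Int.cast : ℤ → 𝕜) := by
    have hmap := Matrix.map_pow E (Int.castRingHom 𝕜) m
    simp only [Int.coe_castRingHom] at hmap
    rw [hmap, ← hE]
    simp only [conj, SubmonoidClass.coe_pow, ← Units.conj_pow']
  have hconj_inj : conj.Injective := fun V W h => Subtype.ext <| by
    simpa only [conj, Units.mul_right_inj, Units.mul_left_inj] using h
  let S := {F : Matrix ι ι ℤ | ∀ i j, ‖(F i j : 𝕜)‖ ≤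
    (∑ k, ‖((P⁻¹ : (Matrix ι ι 𝕜)ˣ) : Matrix ι ι 𝕜) i k‖) * ∑ k, ‖(P : Matrix ι ι 𝕜) k j‖}
  have hS : conj '' Submonoid.powers U ⊆
      (fun F : Matrix ι ι ℤ => F.map (Int.cast : ℤ → 𝕜)) '' S := by
    rintro _ ⟨_, ⟨m, rfl⟩, rfl⟩
    refine ⟨E ^ m, fun i j => ?_, (hconj_pow m).symm⟩
    rw [← map_apply (f := (Int.cast : ℤ → 𝕜)), ← hconj_pow]
    exact norm_mul_mul_apply_le (entry_norm_bound_of_unitary (U ^ m).2) i j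
  rw [← finite_powers]
  exact (((finite_setOf_norm_intCast_apply_le _).image _).subset hS).of_finite_image
    hconj_inj.injOn

variable {l m o α : Type*} [Fintype l] [Fintype m] [Fintype o] [DecidableEq l] [DecidableEq m]
  [DecidableEq o]

theorem fromBlocks_mem_unitaryGroup [CommRing α] [StarRing α] {A : Matrix l l α}
    {D : Matrix m m α} (hA : A ∈ unitaryGroup l α) (hD : D ∈ unitaryGroup m α) :
    fromBlocks A 0 0 D ∈ unitaryGroup (l ⊕ m) α := by
  rw [mem_unitaryGroup_iff, star_eq_conjTranspose, fromBlocks_conjTranspose, fromBlocks_multiply]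
  simp [← star_eq_conjTranspose, mem_unitaryGroup_iff.mp hA, mem_unitaryGroup_iff.mp hD]

theorem blockDiagonal_mem_unitaryGroup [CommRing α] [StarRing α] {R : o → Matrix m m α}
    (hR : ∀ i, R i ∈ unitaryGroup m α) : blockDiagonal R ∈ unitaryGroup (m × o) α := by
  rw [mem_unitaryGroup_iff, star_eq_conjTranspose, blockDiagonal_conjTranspose,
    ← blockDiagonal_mul, ← blockDiagonal_one]
  congr 1
  funext i
  exact mem_unitaryGroup_iff.mp (hR i)

theorem pow_eq_one_of_fromBlocks_one_blockDiagonal_pow_eq_one [Semiring α]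
    {R : o → Matrix m m α} {k : ℕ}
    (h : fromBlocks (1 : Matrix l l α) 0 0 (blockDiagonal R) ^ k = 1) (i : o) : R i ^ k = 1 := by
  rw [fromBlocks_diagonal_pow, one_pow, ← blockDiagonal_pow, ← fromBlocks_one, fromBlocks_inj,
    ← blockDiagonal_one, blockDiagonal_inj] at h
  exact congrFun h.2.2.2 i

end Matrix

theorem rot_add (t u : ℝ) : rot (t + u) = rot t * rot u := by
  ext i j
  fin_cases i <;> fin_cases j <;>
    simp [rot, Matrix.mul_apply, Fin.sum_univ_two, cos_add, sin_add] <;> ring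

theorem rot_zero : rot 0 = 1 := by
  ext i j; fin_cases i <;> fin_cases j <;> simp [rot]

theorem rot_pow (t : ℝ) (k : ℕ) : rot t ^ k = rot (k * t) := by
  induction k with
  | zero => simp [rot_zero]
  | succ k ih => rw [pow_succ, ih, ← rot_add]; push_cast; ring_nf

theorem rot_mem_orthogonalGroup (t : ℝ) : rot t ∈ orthogonalGroup (Fin 2) ℝ := by
  rw [mem_orthogonalGroup_iff]
  ext i j
  fin_cases i <;> fin_cases j <;> simp [rot, Matrix.mul_apply, Fin.sum_univ_two] <;> ring_nf <;>
    simp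

theorem exists_rat_mul_pi_of_rot_pow_eq_one {t : ℝ} {k : ℕ} (hk : k ≠ 0) (h : rot t ^ k = 1) :
    ∃ q : ℚ, t = q * π := by
  rw [rot_pow] at h
  have hcos : cos (k * t) = 1 := by simpa [rot] using congrFun (congrFun h 0) 0
  obtain ⟨N, hN⟩ := (cos_eq_one_iff _).mp hcos
  refine ⟨2 * N / k, ?_⟩
  push_cast
  field_simp
  linarith

theorem rot_blocks_rational_angles_general (s n : ℕ) (a : Fin n → ℝ) (t₀ : ℝ)
    (A : Matrix (Fin s ⊕ Fin 2 × Fin n) (Fin s ⊕ Fin 2 × Fin n) ℝ)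
    (hA : A = Matrix.fromBlocks 1 0 0 (Matrix.blockDiagonal fun i => rot (a i * t₀)))
    (hconj : ∃ P : Matrix (Fin s ⊕ Fin 2 × Fin n) (Fin s ⊕ Fin 2 × Fin n) ℝ, IsUnit P ∧
      ∃ E : Matrix (Fin s ⊕ Fin 2 × Fin n) (Fin s ⊕ Fin 2 × Fin n) ℤ,
        P⁻¹ * A * P = E.map (Int.cast : ℤ → ℝ)) :
    ∀ i : Fin n, ∃ q : ℚ, a i * t₀ = (q : ℝ) * π := by
  obtain ⟨P, hP, E, hE⟩ := hconj
  have hA_orth : A ∈ orthogonalGroup _ ℝ := hA ▸ fromBlocks_mem_unitaryGroup (one_mem _)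
    (blockDiagonal_mem_unitaryGroup fun i => rot_mem_orthogonalGroup _)
  obtain ⟨k, hk, hAk⟩ := isOfFinOrder_iff_pow_eq_one.mp
    (isOfFinOrder_of_conj_eq_map_intCast (U := ⟨A, hA_orth⟩) hP hE)
  have hAk' : A ^ k = 1 := congrArg Subtype.val hAk
  rw [hA] at hAk'
  exact fun i => exists_rat_mul_pi_of_rot_pow_eq_one hk.ne'
    (pow_eq_one_of_fromBlocks_one_blockDiagonal_pow_eq_one hAk' i)

/-- If the block diagonal matrix `Id_s ⊕ θ(a₁t₀) ⊕ ⋯ ⊕ θ(aₙt₀)` (all `aᵢ > 0`,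
`t₀ ≠ 0`) is conjugate over `ℝ` to an integer matrix, then every `aᵢt₀` is a rational
multiple of `π`. -/
theorem rot_blocks_rational_angles (s n : ℕ) (a : Fin n → ℝ) (ha : ∀ i, a i > 0)
    (t₀ : ℝ) (ht₀ : t₀ ≠ 0)
    (A : Matrix (Fin s ⊕ Fin 2 × Fin n) (Fin s ⊕ Fin 2 × Fin n) ℝ)
    (hA : A = Matrix.fromBlocks 1 0 0 (Matrix.blockDiagonal fun i => rot (a i * t₀)))
    (hconj : ∃ P : Matrix (Fin s ⊕ Fin 2 × Fin n) (Fin s ⊕ Fin 2 × Fin n) ℝ, IsUnit P ∧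
      ∃ E : Matrix (Fin s ⊕ Fin 2 × Fin n) (Fin s ⊕ Fin 2 × Fin n) ℤ,
        P⁻¹ * A * P = E.map (Int.cast : ℤ → ℝ)) :
    ∀ i : Fin n, ∃ q : ℚ, a i * t₀ = (q : ℝ) * π :=
  rot_blocks_rational_angles_general s n a t₀ A hA hconj
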